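/- Let Z = ∑_a e^{-β E_a} and suppose the energy assignment f(a) = (1/β) ln[(1/λ)(e^{β E_a} − ((1-λ)/d) ∑_i e^{β E_i})] is well-defined (the argument of the logarithm is positive). Then for the Gibbs state ρ = (1/Z) ∑_a e^{-β E_a} Π_a and the noisy POVM A_a = λ Π_a + (1-λ)/d · 1 with Lüders instrument I_a(ρ) = A_a^{1/2} ρ A_a^{1/2}, one has ∑_a e^{β f(a)} I_a(ρ) = (1/Z) · 1. -/

import Mathlib

/-!
Each `A a = λ Π a + μ 1`, `μ = (1 - λ)/d`, commutes with the Gibbs state `ρ`, hence so does its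
square root, and the Lüders instrument reduces to `I_a(ρ) = A a * ρ`. The energy assignment is
designed so that `λ e^{β f a} = e^{β E a} - μ S` with `S = ∑ i, e^{β E i}`; summing over `a` gives
`∑ a, e^{β f a} = S`, and therefore `∑ a, e^{β f a} A a = ∑ a, e^{β E a} Π a`, the inverse of
`Z ρ`.
-/

open Matrix BigOperators ComplexOrder

/-- The positive semidefinite square root of a positive semidefinite matrix
(the definition of Mathlib of December 2024, since removed). -/
noncomputable def Matrix.PosSemidef.sqrt {n : Type*} [Fintype n] [DecidableEq n] {𝕜 : Type*}
    [RCLike 𝕜] {A : Matrix n n 𝕜} (hA : A.PosSemidef) : Matrix n n 𝕜 :=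
  hA.1.eigenvectorUnitary.1 * diagonal ((↑) ∘ (√·) ∘ hA.1.eigenvalues) *
  (star hA.1.eigenvectorUnitary : Matrix n n 𝕜)

section OrthogonalIdempotents

variable {ι k R : Type*} [Fintype ι] [DecidableEq ι] [CommSemiring k] [Semiring R] [Algebra k R]
  {P : ι → R}

theorem mul_sum_smul_of_orthogonal (hP : ∀ a b, P a * P b = if a = b then P a else 0)
    (c : ι → k) (a : ι) : P a * ∑ b, c b • P b = c a • P a := by
  simp [Finset.mul_sum, hP]

theorem sum_smul_mul_of_orthogonal (hP : ∀ a b, P a * P b = if a = b then P a else 0)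
    (c : ι → k) (a : ι) : (∑ b, c b • P b) * P a = c a • P a := by
  simp [Finset.sum_mul, hP]

theorem sum_smul_mul_sum_smul_of_orthogonal (hP : ∀ a b, P a * P b = if a = b then P a else 0)
    (c c' : ι → k) : (∑ a, c a • P a) * (∑ b, c' b • P b) = ∑ a, (c a * c' a) • P a := by
  simp [Finset.sum_mul, mul_sum_smul_of_orthogonal hP, smul_smul]

theorem commute_sum_smul_of_orthogonal (hP : ∀ a b, P a * P b = if a = b then P a else 0)
    (c : ι → k) (a : ι) : Commute (P a) (∑ b, c b • P b) := by
  rw [Commute, SemiconjBy, mul_sum_smul_of_orthogonal hP, sum_smul_mul_of_orthogonal hP]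

end OrthogonalIdempotents

open scoped MatrixOrder in
theorem Matrix.PosSemidef.sqrt_eq_cfcSqrt {n 𝕜 : Type*} [Fintype n] [DecidableEq n] [RCLike 𝕜]
    {A : Matrix n n 𝕜} (hA : A.PosSemidef) : hA.sqrt = CFC.sqrt A := by
  rw [CFC.sqrt_eq_cfc, cfc_nnreal_eq_real _ A, hA.1.cfc_eq]
  simp [Matrix.PosSemidef.sqrt, IsHermitian.cfc, Unitary.conjStarAlgAut_apply, Function.comp_def,
    max_eq_left (hA.eigenvalues_nonneg _)]

open scoped MatrixOrder in
theorem Matrix.PosSemidef.sqrt_mul_mul_sqrt_of_commute {n 𝕜 : Type*} [Fintype n] [DecidableEq n]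
    [RCLike 𝕜] {A B : Matrix n n 𝕜} (hA : A.PosSemidef) (hAB : Commute A B) :
    hA.sqrt * B * hA.sqrt = A * B := by
  have hsqrt : Commute hA.sqrt B := by
    rw [hA.sqrt_eq_cfcSqrt, CFC.sqrt_eq_cfc]
    exact hAB.cfc_nnreal _
  rw [mul_assoc, ← hsqrt.eq, ← mul_assoc, hA.sqrt_eq_cfcSqrt, CFC.sqrt_mul_sqrt_self A hA.nonneg]

section NoisyMeasurement

variable {ι k R : Type*} [Fintype ι] [Field k] [Ring R] [Algebra k R]

theorem sum_eq_sum_of_mul_eq_sub_mul_sum {lam μ : k} {w e : ι → k} (hlam : lam ≠ 0)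
    (hμ : (Fintype.card ι : k) * μ = 1 - lam) (hw : ∀ a, lam * w a = e a - μ * ∑ i, e i) :
    ∑ a, w a = ∑ a, e a := by
  refine mul_left_cancel₀ hlam ?_
  rw [Finset.mul_sum, Finset.sum_congr rfl fun a _ => hw a, Finset.sum_sub_distrib,
    Finset.sum_const, Finset.card_univ, nsmul_eq_mul]
  linear_combination -(∑ i, e i) * hμ

theorem sum_smul_noisy_eq_sum_smul {P : ι → R} (hP : ∑ a, P a = 1) {lam μ : k} {w e : ι → k}
    (hw : ∀ a, lam * w a = e a - μ * ∑ i, e i) (hsum : ∑ a, w a = ∑ a, e a) :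
    ∑ a, w a • (lam • P a + μ • (1 : R)) = ∑ a, e a • P a := by
  have hcoef : ∀ a, w a * lam = e a - μ * ∑ i, e i := fun a => by rw [mul_comm, hw]
  simp only [smul_add, smul_smul, Finset.sum_add_distrib, hcoef, sub_smul, Finset.sum_sub_distrib]
  rw [← Finset.sum_smul, ← Finset.sum_mul, hsum, ← Finset.smul_sum, hP, mul_comm]
  abel

end NoisyMeasurement

theorem stmt_13_general {d : ℕ} (hd : 0 < d)
    (β : ℝ) (hβ : 0 < β) (E : Fin d → ℝ)
    (lam : ℝ) (hlam0 : 0 < lam)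
    (P : Fin d → Matrix (Fin d) (Fin d) ℂ)
    (hPo : ∀ a a', P a * P a' = if a = a' then P a else 0)
    (hPsum : ∑ a, P a = 1)
    (Z : ℝ)
    (ρ : Matrix (Fin d) (Fin d) ℂ)
    (hρ : ρ = ((1 / Z : ℝ) : ℂ) • ∑ a, ((Real.exp (-(β * E a)) : ℝ) : ℂ) • P a)
    (A : Fin d → Matrix (Fin d) (Fin d) ℂ)
    (hA : ∀ a, A a = (lam : ℂ) • P a + (((1 - lam) / d : ℝ) : ℂ) • 1)
    (hApsd : ∀ a, (A a).PosSemidef)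
    (f : Fin d → ℝ)
    (hpos : ∀ a, 0 < (1 / lam) * (Real.exp (β * E a) - ((1 - lam) / d) * ∑ i, Real.exp (β * E i)))
    (hf : ∀ a, f a = (1 / β) *
      Real.log ((1 / lam) * (Real.exp (β * E a) - ((1 - lam) / d) * ∑ i, Real.exp (β * E i)))) :
    ∑ a, ((Real.exp (β * f a) : ℝ) : ℂ) • ((hApsd a).sqrt * ρ * (hApsd a).sqrt)
      = ((1 / Z : ℝ) : ℂ) • (1 : Matrix (Fin d) (Fin d) ℂ) := by
  have hw : ∀ a, lam * Real.exp (β * f a)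
      = Real.exp (β * E a) - (1 - lam) / d * ∑ i, Real.exp (β * E i) := fun a => by
    rw [hf, ← mul_assoc, mul_one_div_cancel hβ.ne', one_mul, Real.exp_log (hpos a), ← mul_assoc,
      mul_one_div_cancel hlam0.ne', one_mul]
  have hwℂ : ∀ a, (lam : ℂ) * (Real.exp (β * f a) : ℂ)
      = (Real.exp (β * E a) : ℂ) - (((1 - lam) / d : ℝ) : ℂ) * ∑ i, (Real.exp (β * E i) : ℂ) :=
    fun a => by exact_mod_cast hw a
  have hμ : ((Fintype.card (Fin d) : ℕ) : ℂ) * (((1 - lam) / d : ℝ) : ℂ) = 1 - lam := by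
    rw [Fintype.card_fin]
    push_cast
    field_simp
  have hsum := sum_eq_sum_of_mul_eq_sub_mul_sum (by exact_mod_cast hlam0.ne') hμ hwℂ
  have hcomm : ∀ a, Commute (A a) ρ := fun a => by
    rw [hA a, hρ]
    exact (((commute_sum_smul_of_orthogonal hPo _ a).smul_left _).add_left
      ((Commute.one_left _).smul_left _)).smul_right _
  calc ∑ a, ((Real.exp (β * f a) : ℝ) : ℂ) • ((hApsd a).sqrt * ρ * (hApsd a).sqrt)
      = (∑ a, ((Real.exp (β * f a) : ℝ) : ℂ) • A a) * ρ := by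
        simp only [Matrix.PosSemidef.sqrt_mul_mul_sqrt_of_commute _ (hcomm _), Finset.sum_mul,
          smul_mul_assoc]
    _ = (∑ a, ((Real.exp (β * E a) : ℝ) : ℂ) • P a) * ρ := by
        simp only [hA]
        rw [sum_smul_noisy_eq_sum_smul hPsum hwℂ hsum]
    _ = ((1 / Z : ℝ) : ℂ) • (1 : Matrix (Fin d) (Fin d) ℂ) := by
        rw [hρ, mul_smul_comm, sum_smul_mul_sum_smul_of_orthogonal hPo]
        simp only [← Complex.ofReal_mul, ← Real.exp_add, add_neg_cancel, Real.exp_zero,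
          Complex.ofReal_one, one_smul, hPsum]

/-- Key identity for the generalized Jarzynski equality: with the energy assignment
`f a = (1/β) ln[(1/λ)(e^{β E a} − ((1-λ)/d) ∑ i e^{β E i})]` (assumed well-defined), the
Gibbs state `ρ = (1/Z) ∑ e^{-β E a} Π a`, and the noisy POVM `A a = λ Π a + (1-λ)/d · 1`
with Lüders instrument `I_a(ρ) = √(A a) ρ √(A a)`, one has `∑ a, e^{β f a} I_a(ρ) = (1/Z) 1`. -/
theorem stmt_13 {d : ℕ} (hd : 0 < d)
    (β : ℝ) (hβ : 0 < β) (E : Fin d → ℝ)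
    (lam : ℝ) (hlam0 : 0 < lam) (hlam1 : lam ≤ 1)
    (P : Fin d → Matrix (Fin d) (Fin d) ℂ)
    (hPh : ∀ a, (P a).IsHermitian)
    (hPo : ∀ a a', P a * P a' = if a = a' then P a else 0)
    (hPsum : ∑ a, P a = 1)
    (hPtr : ∀ a, (P a).trace = 1)
    (Z : ℝ) (hZ : Z = ∑ a, Real.exp (-(β * E a)))
    (ρ : Matrix (Fin d) (Fin d) ℂ)
    (hρ : ρ = ((1 / Z : ℝ) : ℂ) • ∑ a, ((Real.exp (-(β * E a)) : ℝ) : ℂ) • P a)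
    (A : Fin d → Matrix (Fin d) (Fin d) ℂ)
    (hA : ∀ a, A a = (lam : ℂ) • P a + (((1 - lam) / d : ℝ) : ℂ) • 1)
    (hApsd : ∀ a, (A a).PosSemidef)
    (f : Fin d → ℝ)
    (hpos : ∀ a, 0 < (1 / lam) * (Real.exp (β * E a) - ((1 - lam) / d) * ∑ i, Real.exp (β * E i)))
    (hf : ∀ a, f a = (1 / β) *
      Real.log ((1 / lam) * (Real.exp (β * E a) - ((1 - lam) / d) * ∑ i, Real.exp (β * E i)))) :
    ∑ a, ((Real.exp (β * f a) : ℝ) : ℂ) • ((hApsd a).sqrt * ρ * (hApsd a).sqrt)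
      = ((1 / Z : ℝ) : ℂ) • (1 : Matrix (Fin d) (Fin d) ℂ) :=
  stmt_13_general hd β hβ E lam hlam0 P hPo hPsum Z ρ hρ A hA hApsd f hpos hf
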